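/- arXiv:2406.02140 — 2 statements merged into one kernel-verified Lean document; each statement's English description precedes it below -/
import Mathlib

section
/- Let M : ℝ^n → (probability measures on ℝ^m) be any mechanism whose outputs have finite second moments, let A ∈ ℝ^{m×n}, let x ∈ ℝ^n, and let C > 0. If Var[θᵀM(x)] ≥ (w_{AB₁^n}(θ)/C)² for every θ ∈ ℝ^m, then AB₁^n ⊆↔ C·√(Σ_M(x))·B₂^m; that is, there exists v ∈ ℝ^m such that AB₁^n + v ⊆ { C·√(Σ_M(x))·u : ‖u‖₂ ≤ 1 }. -/
open MeasureTheory Matrix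
open scoped ENNReal

noncomputable section

namespace DPPaper

variable {ι κ : Type*}

/-- Two inputs `x, x' : ι → ℝ` are neighboring if `‖x - x'‖₁ ≤ 1`. -/
def Neighboring [Fintype ι] (x x' : ι → ℝ) : Prop :=
  ∑ i, |x i - x' i| ≤ 1

/-- A mechanism `M` (a map from inputs to probability measures on an output space `Ω`)
is `(ε,δ)`-differentially private if for all neighboring inputs and all measurable sets `S`,
`M x S ≤ e^ε · M x' S + δ`. -/
def IsDP [Fintype ι] {Ω : Type*} [MeasurableSpace Ω]
    (M : (ι → ℝ) → Measure Ω) (ε δ : ℝ) : Prop :=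
  ∀ x x' : ι → ℝ, Neighboring x x' → ∀ S : Set Ω, MeasurableSet S →
    M x S ≤ ENNReal.ofReal (Real.exp ε) * M x' S + ENNReal.ofReal δ

/-- The `ℓ_p^p`-error of a mechanism `M` on the query matrix `A`:
`sup_x (E_{Y ~ M x} [ ‖Y - A x‖_p^p ])^{1/p}`, valued in `ℝ≥0∞`. -/
def errLp [Fintype ι] [Fintype κ] (M : (ι → ℝ) → Measure (κ → ℝ))
    (A : Matrix κ ι ℝ) (p : ℝ) : ℝ≥0∞ :=
  ⨆ x : ι → ℝ,
    (∫⁻ y, ENNReal.ofReal (∑ i, |y i - A.mulVec x i| ^ p) ∂(M x)) ^ (1 / p)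

/-- The `q`-trace of a square matrix: `(∑ i, U i i ^ q)^{1/q}`. -/
def trq [Fintype κ] (q : ℝ) (U : Matrix κ κ ℝ) : ℝ :=
  (∑ i, (U i i) ^ q) ^ (1 / q)

/-- The `1 → 2` operator norm of a matrix: the largest `ℓ₂`-norm of a column. -/
def norm12 [Fintype ι] [Fintype κ] (R : Matrix κ ι ℝ) : ℝ :=
  ⨆ j : ι, Real.sqrt (∑ i, (R i j) ^ 2)

/-- The factorization norm `γ_{(p)}(A)`. -/
def gammaP [Fintype ι] [Fintype κ] (p : ℝ) (A : Matrix κ ι ℝ) : ℝ :=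
  sInf { c : ℝ | ∃ (k : ℕ) (L : Matrix κ (Fin k) ℝ) (R : Matrix (Fin k) ι ℝ),
    L * R = A ∧ c = Real.sqrt (trq (p / 2) (L * Lᵀ)) * norm12 R }

/-- The Schatten-1 norm of a matrix: the trace of the PSD square root of `Aᵀ * A`,
i.e. the sum of the singular values of `A`. -/
def schatten1 [Fintype ι] [Fintype κ] [DecidableEq ι] (A : Matrix κ ι ℝ) : ℝ :=
  ((Matrix.posSemidef_conjTranspose_mul_self A).1.eigenvectorUnitary.1 *
    diagonal ((RCLike.ofReal : ℝ → ℝ) ∘ Real.sqrt ∘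
      (Matrix.posSemidef_conjTranspose_mul_self A).1.eigenvalues) *
    (star (Matrix.posSemidef_conjTranspose_mul_self A).1.eigenvectorUnitary : Matrix ι ι ℝ)).trace

/-- The sensitivity polytope `A B₁^n = {A x : ‖x‖₁ ≤ 1}`. -/
def sensPolytope [Fintype ι] (A : Matrix κ ι ℝ) : Set (κ → ℝ) :=
  {v | ∃ x : ι → ℝ, (∑ i, |x i|) ≤ 1 ∧ v = A.mulVec x}

/-- The width of a set `K` in direction `θ`. -/
def width [Fintype κ] (K : Set (κ → ℝ)) (θ : κ → ℝ) : ℝ :=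
  sSup ((fun v => ∑ i, θ i * v i) '' K) - sInf ((fun v => ∑ i, θ i * v i) '' K)

/-- `κ(A)`: the minimal width of the sensitivity polytope over all unit directions. -/
def kappa [Fintype ι] [Fintype κ] (A : Matrix κ ι ℝ) : ℝ :=
  sInf { c : ℝ | ∃ θ : κ → ℝ, (∑ i, (θ i) ^ 2) = 1 ∧ c = width (sensPolytope A) θ }

/-- The prefix-sum (continual counting) matrix: lower-triangular all ones. -/
def Aprefix (n : ℕ) : Matrix (Fin n) (Fin n) ℝ :=
  fun i j => if j ≤ i then 1 else 0

/-- The covariance matrix of a measure on `κ → ℝ`. -/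
def covMatrix [Fintype κ] (μ : Measure (κ → ℝ)) : Matrix κ κ ℝ :=
  fun i j => ∫ y, (y i - ∫ y', y' i ∂μ) * (y j - ∫ y', y' j ∂μ) ∂μ

/-- The parity query matrix `Q_{d,w}`: rows indexed by `w`-element subsets `P` of `{1,…,d}`,
columns indexed by points of `{-1,1}^d` (encoded as `Fin d → Bool`), entry `∏_{i ∈ P} x_i`. -/
def parityMatrix (d w : ℕ) : Matrix {P : Finset (Fin d) // P.card = w} (Fin d → Bool) ℝ :=
  fun P b => ∏ i ∈ P.1, (if b i then (1 : ℝ) else -1)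

/-- The Hadamard matrices: `H_0 = [1]`, `H_{d+1} = [[H_d, H_d], [H_d, -H_d]]`. -/
def Hadamard : (d : ℕ) → Matrix (Fin (2 ^ d)) (Fin (2 ^ d)) ℝ
  | 0 => fun _ _ => 1
  | (d + 1) =>
    Matrix.reindex
      (finSumFinEquiv.trans (finCongr (by rw [pow_succ, mul_two])))
      (finSumFinEquiv.trans (finCongr (by rw [pow_succ, mul_two])))
      (Matrix.fromBlocks (Hadamard d) (Hadamard d) (Hadamard d) (-(Hadamard d)))

end DPPaper

open DPPaper ProbabilityTheory

/-!
Since `θᵀ Σ θ = ‖W θ‖²`, the hypothesis bounds the width of the sensitivity polytope in direction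
`θ` by `C ‖W θ‖`. The polytope is compact and centrally symmetric, so every `u` in it satisfies
`θ ⬝ u ≤ C ‖W θ‖` for all `θ` (no translation is needed). Such a `u` is orthogonal to
`ker W = ker W²`, hence lies in the range of the symmetric matrix `W²`; writing `u = W (W θ)` and
testing at this `θ` gives `‖W θ‖² ≤ C ‖W θ‖`, so `u = C W b` with `b = W θ / C` in the unit ball.
-/

namespace Matrix

variable {κ : Type*} [Fintype κ]

theorem IsHermitian.exists_mulVec_eq_of_forall_mulVec_eq_zero {S : Matrix κ κ ℝ}
    (hS : S.IsHermitian) {u : κ → ℝ} (hu : ∀ z, S *ᵥ z = 0 → z ⬝ᵥ u = 0) :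
    ∃ θ, S *ᵥ θ = u := by
  classical
  have hmem : WithLp.toLp 2 u ∈ LinearMap.range S.toEuclideanLin := by
    rw [← Submodule.orthogonal_orthogonal (LinearMap.range _),
      (isSymmetric_toEuclideanLin_iff.mpr hS).orthogonal_range]
    intro z hz
    simpa [PiLp.inner_apply, dotProduct, mul_comm] using hu z.ofLp (congrArg WithLp.ofLp hz)
  obtain ⟨θ, hθ⟩ := hmem
  exact ⟨θ.ofLp, congrArg WithLp.ofLp hθ⟩

theorem IsHermitian.dotProduct_mul_self_mulVec {W : Matrix κ κ ℝ} (hW : W.IsHermitian)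
    (θ : κ → ℝ) :
    θ ⬝ᵥ (W * W) *ᵥ θ = W *ᵥ θ ⬝ᵥ W *ᵥ θ := by
  rw [← mulVec_mulVec, dotProduct_mulVec, ← mulVec_transpose]
  simpa using congrArg (fun M ↦ M *ᵥ θ ⬝ᵥ W *ᵥ θ) hW

theorem IsHermitian.exists_eq_smul_mulVec_of_dotProduct_le {W : Matrix κ κ ℝ}
    (hW : W.IsHermitian) {C : ℝ} (hC : 0 < C) {u : κ → ℝ}
    (hu : ∀ θ, θ ⬝ᵥ u ≤ C * √(W *ᵥ θ ⬝ᵥ W *ᵥ θ)) :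
    ∃ b, b ⬝ᵥ b ≤ 1 ∧ u = C • W *ᵥ b := by
  have hker : ∀ z, (W * W) *ᵥ z = 0 → z ⬝ᵥ u = 0 := by
    intro z hz
    have hWz : W *ᵥ z = 0 := by
      rw [← dotProduct_self_eq_zero, ← hW.dotProduct_mul_self_mulVec, hz, dotProduct_zero]
    have h₁ := hu z
    have h₂ := hu (-z)
    simp only [hWz, mulVec_neg, neg_zero, dotProduct_zero, Real.sqrt_zero, mul_zero,
      neg_dotProduct] at h₁ h₂
    linarith
  have hWW : (W * W).IsHermitian := by
    simpa only [hW.eq] using isHermitian_mul_conjTranspose_self W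
  obtain ⟨θ, rfl⟩ := hWW.exists_mulVec_eq_of_forall_mulVec_eq_zero hker
  set w := W *ᵥ θ
  have hw : w ⬝ᵥ w ≤ C ^ 2 := by
    have h : w ⬝ᵥ w ≤ C * √(w ⬝ᵥ w) := by
      simpa only [hW.dotProduct_mul_self_mulVec] using hu θ
    have hs := Real.sq_sqrt (by simpa using dotProduct_self_star_nonneg w)
    nlinarith [Real.sqrt_nonneg (w ⬝ᵥ w)]
  refine ⟨C⁻¹ • w, ?_, ?_⟩
  · rw [smul_dotProduct, dotProduct_smul, smul_eq_mul, smul_eq_mul, ← mul_assoc, ← sq, inv_pow,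
      inv_mul_le_one₀ (by positivity)]
    exact hw
  · rw [mulVec_smul, smul_smul, mul_inv_cancel₀ hC.ne', one_smul, mulVec_mulVec]

end Matrix

namespace DPPaper

variable {ι κ : Type*}

theorem covMatrix_apply [Fintype κ] (μ : Measure (κ → ℝ)) (i j : κ) :
    covMatrix μ i j = cov[fun y ↦ y i, fun y ↦ y j; μ] := rfl

theorem dotProduct_covMatrix_mulVec [Fintype κ] (μ : Measure (κ → ℝ)) [IsFiniteMeasure μ]
    (hμ : ∀ i, MemLp (fun y : κ → ℝ ↦ y i) 2 μ) (θ : κ → ℝ) :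
    θ ⬝ᵥ covMatrix μ *ᵥ θ = Var[fun y ↦ θ ⬝ᵥ y; μ] := by
  have hθμ : ∀ i, MemLp (fun y : κ → ℝ ↦ θ i * y i) 2 μ := fun i ↦ (hμ i).const_mul (θ i)
  rw [← covariance_self (by fun_prop)]
  simp only [dotProduct, covariance_fun_sum_fun_sum hθμ hθμ, covariance_const_mul_left,
    covariance_const_mul_right, covMatrix_apply, mulVec, Finset.mul_sum]
  exact Finset.sum_congr rfl fun i _ ↦ Finset.sum_congr rfl fun j _ ↦ by ring

variable [Fintype ι]

theorem sensPolytope_eq_image (A : Matrix κ ι ℝ) :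
    sensPolytope A = A.mulVec '' {x | ∑ i, |x i| ≤ 1} := by
  ext v
  simp only [sensPolytope, Set.mem_ofPred_eq, Set.mem_image, eq_comm]

theorem isCompact_sensPolytope (A : Matrix κ ι ℝ) : IsCompact (sensPolytope A) := by
  rw [sensPolytope_eq_image]
  refine (Metric.isCompact_of_isClosed_isBounded ?_ ?_).image (by fun_prop)
  · exact isClosed_le (by fun_prop) continuous_const
  · refine (Metric.isBounded_closedBall (x := 0) (r := 1)).subset fun x hx ↦ ?_
    rw [mem_closedBall_zero_iff, pi_norm_le_iff_of_nonneg zero_le_one]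
    exact fun i ↦ (Finset.single_le_sum (fun j _ ↦ abs_nonneg (x j)) (Finset.mem_univ i)).trans hx

theorem neg_mem_sensPolytope {A : Matrix κ ι ℝ} {u : κ → ℝ} (hu : u ∈ sensPolytope A) :
    -u ∈ sensPolytope A := by
  obtain ⟨x, hx, rfl⟩ := hu
  exact ⟨-x, by simpa using hx, (mulVec_neg x A).symm⟩

omit [Fintype ι] in
theorem dotProduct_sub_dotProduct_le_width [Fintype κ] {K : Set (κ → ℝ)} (hK : IsCompact K)
    (θ : κ → ℝ) {u v : κ → ℝ} (hu : u ∈ K) (hv : v ∈ K) : θ ⬝ᵥ u - θ ⬝ᵥ v ≤ width K θ := by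
  have hθK : IsCompact ((fun v ↦ θ ⬝ᵥ v) '' K) := hK.image (by fun_prop)
  exact sub_le_sub (le_csSup hθK.bddAbove ⟨u, hu, rfl⟩) (csInf_le hθK.bddBelow ⟨v, hv, rfl⟩)

theorem two_mul_dotProduct_le_width_sensPolytope [Fintype κ] {A : Matrix κ ι ℝ} (θ : κ → ℝ)
    {u : κ → ℝ} (hu : u ∈ sensPolytope A) : 2 * (θ ⬝ᵥ u) ≤ width (sensPolytope A) θ := by
  have h := dotProduct_sub_dotProduct_le_width (isCompact_sensPolytope A) θ hu
    (neg_mem_sensPolytope hu)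
  rwa [dotProduct_neg, sub_neg_eq_add, ← two_mul] at h

end DPPaper

/-- if all one-dimensional marginals of M(x) have variance at least
  (w_{AB₁ⁿ}(θ)/C)², then the sensitivity polytope is covered by a translate of
  C·√(Σ_M(x))·B₂^m.  (√(Σ_M(x)) is characterized as the PSD matrix W with W·W = Σ_M(x).) -/
theorem cov_covers_sensitivity_polytope (m n : ℕ)
    (M : (Fin n → ℝ) → Measure (Fin m → ℝ))
    (hprob : ∀ x, IsProbabilityMeasure (M x))
    (hmom : ∀ x i, Integrable (fun y => (y i) ^ 2) (M x))
    (A : Matrix (Fin m) (Fin n) ℝ) (x : Fin n → ℝ) (C : ℝ) (hC : 0 < C)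
    (hvar : ∀ θ : Fin m → ℝ,
      (∫ y, ((∑ i, θ i * y i) - ∫ y', ∑ i, θ i * y' i ∂(M x)) ^ 2 ∂(M x))
        ≥ (width (sensPolytope A) θ / C) ^ 2) :
    ∀ W : Matrix (Fin m) (Fin m) ℝ, W.PosSemidef → W * W = covMatrix (M x) →
      ∃ v : Fin m → ℝ, ∀ u ∈ sensPolytope A,
        ∃ b : Fin m → ℝ, (∑ i, (b i) ^ 2) ≤ 1 ∧ u + v = C • W.mulVec b := by
  intro W hW hWW
  have hL2 : ∀ i, MemLp (fun y : Fin m → ℝ ↦ y i) 2 (M x) := fun i ↦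
    (memLp_two_iff_integrable_sq (measurable_pi_apply i).aestronglyMeasurable).2 (hmom x i)
  have hwidth : ∀ θ, width (sensPolytope A) θ ≤ C * √(W *ᵥ θ ⬝ᵥ W *ᵥ θ) := by
    intro θ
    have hvarθ : (width (sensPolytope A) θ / C) ^ 2 ≤ W *ᵥ θ ⬝ᵥ W *ᵥ θ := by
      have := hprob x
      rw [← hW.isHermitian.dotProduct_mul_self_mulVec, hWW, dotProduct_covMatrix_mulVec _ hL2,
        variance_eq_integral (by fun_prop)]
      exact hvar θ
    have h := (le_abs_self _).trans (Real.abs_le_sqrt hvarθ)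
    rwa [div_le_iff₀ hC, mul_comm] at h
  refine ⟨0, fun u hu ↦ ?_⟩
  have hsupport : ∀ θ, θ ⬝ᵥ u ≤ C * √(W *ᵥ θ ⬝ᵥ W *ᵥ θ) := fun θ ↦ by
    have := two_mul_dotProduct_le_width_sensPolytope θ hu
    nlinarith [hwidth θ, Real.sqrt_nonneg (W *ᵥ θ ⬝ᵥ W *ᵥ θ)]
  obtain ⟨b, hb, hub⟩ := hW.isHermitian.exists_eq_smul_mulVec_of_dotProduct_le hC hsupport
  exact ⟨b, by simpa only [dotProduct, sq] using hb, by rw [add_zero, hub]⟩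
end
end

section
/- For every matrix A ∈ ℝ^{m×n} and every p ∈ [2, ∞), γ_{(p)}(A) ≥ m^{1/p} ‖A‖₁ / √(mn), i.e., γ_{(p)}(A) ≥ m^{1/p − 1/2} ‖A‖₁ / √n. -/
open MeasureTheory Matrix
open scoped ENNReal

noncomputable section

open DPPaper

/-!
Write `A = L R`. The trace norm is attained by a partial isometry: with `AᵀA = U diag(d) Uᵀ`,
the matrix `W = A U diag(d)^{-1/2}` satisfies `‖A‖₁ = tr(Wᵀ A U)` and `‖Wᵀ‖ ≤ 1`. Cauchy–Schwarz
for the Frobenius inner product then gives `‖A‖₁ ≤ ‖L‖_F ‖R‖_F`. Finally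
`‖L‖_F² = tr(L Lᵀ) ≤ m^{1 - 2/p} tr_{p/2}(L Lᵀ)` by the power-mean inequality, and
`‖R‖_F² ≤ n ‖R‖²_{1→2}` column by column.
-/

namespace Matrix

variable {ι κ μ : Type*} [Fintype ι] [Fintype κ] [Fintype μ]

theorem trace_transpose_mul_self_eq_sum (X : Matrix κ ι ℝ) :
    (Xᵀ * X).trace = ∑ j, Xᵀ j ⬝ᵥ Xᵀ j :=
  rfl

theorem trace_transpose_mul_le (X Y : Matrix κ ι ℝ) :
    (Xᵀ * Y).trace ≤ √(Xᵀ * X).trace * √(Yᵀ * Y).trace := by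
  simpa [trace, mul_apply, Fintype.sum_prod_type, sq] using
    Real.sum_mul_le_sqrt_mul_sqrt Finset.univ (fun q : ι × κ => X q.2 q.1)
      (fun q => Y q.2 q.1)

theorem mulVec_dotProduct_mulVec_self (B : Matrix κ ι ℝ) (y : ι → ℝ) :
    (B *ᵥ y) ⬝ᵥ (B *ᵥ y) = y ⬝ᵥ (Bᵀ * B) *ᵥ y := by
  rw [← mulVec_mulVec, dotProduct_mulVec y, vecMul_transpose]

theorem transpose_mulVec_dotProduct_self_le {W : Matrix κ ι ℝ}
    (hW : ∀ y, (W *ᵥ y) ⬝ᵥ (W *ᵥ y) ≤ y ⬝ᵥ y) (x : κ → ℝ) :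
    (Wᵀ *ᵥ x) ⬝ᵥ (Wᵀ *ᵥ x) ≤ x ⬝ᵥ x := by
  set y := Wᵀ *ᵥ x
  have hy : y ⬝ᵥ y = (W *ᵥ y) ⬝ᵥ x := by
    rw [← vecMul_transpose, ← dotProduct_mulVec]
  have hcs : ((W *ᵥ y) ⬝ᵥ x) ^ 2 ≤ ((W *ᵥ y) ⬝ᵥ (W *ᵥ y)) * (x ⬝ᵥ x) := by
    simpa only [dotProduct, sq] using
      Finset.sum_mul_sq_le_sq_mul_sq Finset.univ (W *ᵥ y) x
  have hy0 : 0 ≤ y ⬝ᵥ y := Finset.sum_nonneg fun i _ => mul_self_nonneg (y i)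
  have hx0 : 0 ≤ x ⬝ᵥ x := Finset.sum_nonneg fun i _ => mul_self_nonneg (x i)
  rw [← hy] at hcs
  nlinarith [hW y]

theorem trace_transpose_mul_self_transpose_mul_le {V : Matrix κ ι ℝ}
    (hV : ∀ x, (Vᵀ *ᵥ x) ⬝ᵥ (Vᵀ *ᵥ x) ≤ x ⬝ᵥ x) (L : Matrix κ μ ℝ) :
    ((Vᵀ * L)ᵀ * (Vᵀ * L)).trace ≤ (Lᵀ * L).trace := by
  rw [trace_transpose_mul_self_eq_sum, trace_transpose_mul_self_eq_sum]
  exact Finset.sum_le_sum fun r _ => hV (Lᵀ r)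

end Matrix

namespace DPPaper

variable {ι κ μ : Type*} [Fintype ι] [Fintype κ] [Fintype μ]

theorem schatten1_eq_sum_sqrt_eigenvalues [DecidableEq ι] (A : Matrix κ ι ℝ) :
    schatten1 A = ∑ j, √((posSemidef_conjTranspose_mul_self A).1.eigenvalues j) := by
  rw [schatten1, trace_mul_cycle, Unitary.coe_star_mul_self, Matrix.one_mul, trace_diagonal]
  rfl

theorem exists_contraction_schatten1_eq_trace [DecidableEq ι] (A : Matrix κ ι ℝ) :
    ∃ (W : Matrix κ ι ℝ) (U : Matrix ι ι ℝ), U * Uᵀ = 1 ∧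
      (∀ x, (Wᵀ *ᵥ x) ⬝ᵥ (Wᵀ *ᵥ x) ≤ x ⬝ᵥ x) ∧ schatten1 A = (Wᵀ * A * U).trace := by
  set hA := (posSemidef_conjTranspose_mul_self A).1
  set U : Matrix ι ι ℝ := hA.eigenvectorUnitary.1
  set d := hA.eigenvalues
  have hU : star U = Uᵀ := by rw [star_eq_conjTranspose, conjTranspose_eq_transpose_of_trivial]
  have hUU : U * Uᵀ = 1 := by rw [← hU]; exact Unitary.coe_mul_star_self _
  have hAU : (A * U)ᵀ * (A * U) = diagonal d := by
    have h : star U * (Aᴴ * A) * U = diagonal d := by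
      simpa only [Unitary.conjStarAlgAut_star_apply, RCLike.ofReal_real_eq_id,
        Function.id_comp] using hA.conjStarAlgAut_star_eigenvectorUnitary
    rw [← h, hU, conjTranspose_eq_transpose_of_trivial, transpose_mul]
    simp only [Matrix.mul_assoc]
  -- The columns of `A * U` are orthogonal with squared norms `d j`; `D` normalizes them, and
  -- `(√0)⁻¹ = 0` keeps the vanishing ones at zero.
  set D := diagonal fun j => (√(d j))⁻¹
  have hWAU : (A * U * D)ᵀ * (A * U) = diagonal fun j => √(d j) := by
    rw [transpose_mul, diagonal_transpose, Matrix.mul_assoc, hAU, diagonal_mul_diagonal]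
    simp only [inv_mul_eq_div, Real.div_sqrt]
  have hWW : (A * U * D)ᵀ * (A * U * D) = diagonal fun j => √(d j) * (√(d j))⁻¹ := by
    rw [← Matrix.mul_assoc, hWAU, diagonal_mul_diagonal]
  refine ⟨A * U * D, U, hUU, transpose_mulVec_dotProduct_self_le fun y => ?_, ?_⟩
  · rw [mulVec_dotProduct_mulVec_self, hWW]
    refine Finset.sum_le_sum fun j _ => ?_
    rw [mulVec_diagonal]
    nlinarith [mul_self_nonneg (y j), mul_inv_le_one (a := √(d j))]
  · rw [schatten1_eq_sum_sqrt_eigenvalues, Matrix.mul_assoc, hWAU, trace_diagonal]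

theorem schatten1_mul_le [DecidableEq ι] (L : Matrix κ μ ℝ) (R : Matrix μ ι ℝ) :
    schatten1 (L * R) ≤ √(L * Lᵀ).trace * √(Rᵀ * R).trace := by
  obtain ⟨W, U, hUU, hW, hLR⟩ := exists_contraction_schatten1_eq_trace (L * R)
  have hL : ((Lᵀ * W)ᵀ * (Lᵀ * W)).trace ≤ (L * Lᵀ).trace := by
    calc ((Lᵀ * W)ᵀ * (Lᵀ * W)).trace = ((Wᵀ * L)ᵀ * (Wᵀ * L)).trace := by
          rw [trace_mul_comm]; simp only [transpose_mul, transpose_transpose]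
      _ ≤ (Lᵀ * L).trace := trace_transpose_mul_self_transpose_mul_le hW L
      _ = (L * Lᵀ).trace := trace_mul_comm _ _
  have hR : ((R * U)ᵀ * (R * U)).trace = (Rᵀ * R).trace := by
    rw [transpose_mul, Matrix.mul_assoc, trace_mul_comm, Matrix.mul_assoc, Matrix.mul_assoc,
      hUU, Matrix.mul_one]
  calc schatten1 (L * R) = ((Lᵀ * W)ᵀ * (R * U)).trace := by
        rw [hLR, transpose_mul, transpose_transpose]; simp only [Matrix.mul_assoc]
    _ ≤ √((Lᵀ * W)ᵀ * (Lᵀ * W)).trace * √((R * U)ᵀ * (R * U)).trace :=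
        trace_transpose_mul_le _ _
    _ ≤ √(L * Lᵀ).trace * √(Rᵀ * R).trace := by rw [hR]; gcongr

theorem trace_le_card_rpow_mul_trq {U : Matrix κ κ ℝ} (hU : ∀ i, 0 ≤ U i i) {q : ℝ}
    (hq : 1 ≤ q) : U.trace ≤ (Fintype.card κ : ℝ) ^ (1 - 1 / q) * trq q U := by
  have hq0 : q ≠ 0 := by positivity
  have htr : 0 ≤ U.trace := Finset.sum_nonneg fun i _ => hU i
  calc U.trace = (U.trace ^ q) ^ q⁻¹ := (Real.rpow_rpow_inv htr hq0).symm
    _ ≤ ((Fintype.card κ : ℝ) ^ (q - 1) * ∑ i, U i i ^ q) ^ q⁻¹ := by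
        gcongr
        exact Real.rpow_sum_le_const_mul_sum_rpow_of_nonneg Finset.univ hq fun i _ => hU i
    _ = (Fintype.card κ : ℝ) ^ (1 - 1 / q) * trq q U := by
        rw [Real.mul_rpow (by positivity) (Finset.sum_nonneg fun i _ => Real.rpow_nonneg (hU i) q),
          ← Real.rpow_mul (by positivity), trq, one_div]
        congr 2
        field_simp

theorem norm12_nonneg (R : Matrix κ ι ℝ) : 0 ≤ norm12 R :=
  Real.iSup_nonneg fun _ => Real.sqrt_nonneg _

theorem sqrt_sum_sq_le_norm12 (R : Matrix κ ι ℝ) (j : ι) : √(∑ i, R i j ^ 2) ≤ norm12 R :=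
  le_ciSup (f := fun j => √(∑ i, R i j ^ 2)) (Set.finite_range _).bddAbove j

theorem trace_transpose_mul_self_le_card_mul_norm12_sq (R : Matrix κ ι ℝ) :
    (Rᵀ * R).trace ≤ Fintype.card ι * norm12 R ^ 2 := by
  rw [trace_transpose_mul_self_eq_sum, ← nsmul_eq_mul, ← Finset.card_univ, ← Finset.sum_const]
  refine Finset.sum_le_sum fun j _ => ?_
  calc Rᵀ j ⬝ᵥ Rᵀ j = √(∑ i, R i j ^ 2) ^ 2 := by
        rw [Real.sq_sqrt (Finset.sum_nonneg fun i _ => sq_nonneg _)]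
        simp only [dotProduct, transpose_apply, sq]
    _ ≤ norm12 R ^ 2 := by gcongr; exact sqrt_sum_sq_le_norm12 R j

theorem card_rpow_mul_schatten1_div_sqrt_card_le [DecidableEq ι] {p : ℝ} (hp : 2 ≤ p)
    (L : Matrix κ μ ℝ) (R : Matrix μ ι ℝ) :
    (Fintype.card κ : ℝ) ^ (1 / p - 1 / 2) * schatten1 (L * R) / √(Fintype.card ι) ≤
      √(trq (p / 2) (L * Lᵀ)) * norm12 R := by
  set m : ℝ := (Fintype.card κ : ℝ)
  set n : ℝ := (Fintype.card ι : ℝ)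
  have hL : (L * Lᵀ).trace ≤ m ^ (1 - 2 / p) * trq (p / 2) (L * Lᵀ) := by
    convert trace_le_card_rpow_mul_trq (U := L * Lᵀ)
      (fun i => Finset.sum_nonneg fun j _ => mul_self_nonneg (L i j)) (q := p / 2) (by linarith)
      using 3
    field_simp
  have hm : √(m ^ (1 - 2 / p)) = (m ^ (1 / p - 1 / 2))⁻¹ := by
    rw [Real.sqrt_eq_rpow, ← Real.rpow_mul (by positivity), ← Real.rpow_neg (by positivity)]
    ring_nf
  have hS : schatten1 (L * R) ≤
      (m ^ (1 / p - 1 / 2))⁻¹ * (√(trq (p / 2) (L * Lᵀ)) * norm12 R * √n) := by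
    calc schatten1 (L * R) ≤ √(L * Lᵀ).trace * √(Rᵀ * R).trace := schatten1_mul_le L R
      _ ≤ √(m ^ (1 - 2 / p) * trq (p / 2) (L * Lᵀ)) * √(n * norm12 R ^ 2) := by
          gcongr
          exact trace_transpose_mul_self_le_card_mul_norm12_sq R
      _ = (m ^ (1 / p - 1 / 2))⁻¹ * (√(trq (p / 2) (L * Lᵀ)) * norm12 R * √n) := by
          rw [Real.sqrt_mul (by positivity), Real.sqrt_mul (by positivity),
            Real.sqrt_sq (norm12_nonneg R), hm]
          ring
  refine div_le_of_le_mul₀ (Real.sqrt_nonneg _)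
    (mul_nonneg (Real.sqrt_nonneg _) (norm12_nonneg R)) ?_
  -- `m ^ a * (m ^ a)⁻¹` is only `≤ 1`: it vanishes when `m = 0` and `a ≠ 0`.
  calc m ^ (1 / p - 1 / 2) * schatten1 (L * R)
      ≤ m ^ (1 / p - 1 / 2) * (m ^ (1 / p - 1 / 2))⁻¹ *
          (√(trq (p / 2) (L * Lᵀ)) * norm12 R * √n) := by
        rw [mul_assoc]; gcongr
    _ ≤ √(trq (p / 2) (L * Lᵀ)) * norm12 R * √n :=
        mul_le_of_le_one_left (by have := norm12_nonneg R; positivity) mul_inv_le_one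

end DPPaper

/-- γ_{(p)}(A) ≥ m^{1/p - 1/2} ‖A‖₁ / √n. -/
theorem gammaP_ge_schatten (m n : ℕ) (p : ℝ) (hp : 2 ≤ p)
    (A : Matrix (Fin m) (Fin n) ℝ) :
    gammaP p A ≥ (m : ℝ) ^ ((1 : ℝ) / p - 1 / 2) * schatten1 A / Real.sqrt n := by
  refine le_csInf ⟨_, n, A, 1, Matrix.mul_one A, rfl⟩ ?_
  rintro c ⟨k, L, R, rfl, rfl⟩
  simpa using card_rpow_mul_schatten1_div_sqrt_card_le hp L R
end
end
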